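/- arXiv:2406.10751 — 2 statements merged into one kernel-verified Lean document; each statement's English description precedes it below -/
import Mathlib

section
/- Let (X, μ) be a measure space with μ a finite measure, and let w : X → ℝ be a measurable function with |w(x)| ≤ C for all x, for some constant C > 0. If μ({x | w(x) > 0}) > 0, then the integral ∫_X w(x)·log(√(w(x)² + a²) − w(x)) dμ(x) tends to −∞ as a → 0⁺. -/
/-!
For `z > 0` the identity `(√(z² + a²) - z)(√(z² + a²) + z) = a²` gives
`√(z² + a²) - z ≤ a² / z`, while for `z ≤ 0` the argument of the logarithm is at least `|z|`.
Together with `-t log t ≤ 1` this yields the pointwise bound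
`z log (√(z² + a²) - z) ≤ 2 z⁺ log a + 1`, valid for every `a > 0`. Integrating it,
`∫ w log (√(w² + a²) - w) dμ ≤ 2 (∫ w⁺ dμ) log a + μ(X)`, and `∫ w⁺ dμ > 0` because `w > 0`
on a set of positive measure, so the right-hand side tends to `-∞` as `a → 0⁺`.
-/

open Filter Real MeasureTheory

lemma abs_lt_sqrt_sq_add_sq (z : ℝ) {a : ℝ} (ha : a ≠ 0) : |z| < √(z ^ 2 + a ^ 2) := by
  rw [← sqrt_sq_eq_abs]
  exact sqrt_lt_sqrt (sq_nonneg z) (lt_add_of_pos_right _ (by positivity))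

lemma sqrt_sq_add_sq_sub_pos (z : ℝ) {a : ℝ} (ha : a ≠ 0) : 0 < √(z ^ 2 + a ^ 2) - z := by
  linarith [le_abs_self z, abs_lt_sqrt_sq_add_sq z ha]

lemma continuous_mul_log_sqrt_sq_add_sq_sub {a : ℝ} (ha : a ≠ 0) :
    Continuous fun z : ℝ => z * log (√(z ^ 2 + a ^ 2) - z) :=
  continuous_id.mul <| Continuous.log (by fun_prop) fun z => (sqrt_sq_add_sq_sub_pos z ha).ne'

lemma mul_log_sqrt_sq_add_sq_sub_le (z : ℝ) {a : ℝ} (ha : 0 < a) :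
    z * log (√(z ^ 2 + a ^ 2) - z) ≤ 2 * max z 0 * log a + 1 := by
  set s := √(z ^ 2 + a ^ 2) - z
  have hs : 0 < s := sqrt_sq_add_sq_sub_pos z ha.ne'
  rcases lt_trichotomy z 0 with hz | rfl | hz
  · have hz_le : -z ≤ √(z ^ 2 + a ^ 2) :=
      (neg_le_abs z).trans (abs_lt_sqrt_sq_add_sq z ha.ne').le
    have hlog : log (-z) ≤ log s := log_le_log (by linarith) (by linarith)
    have := self_sub_one_le_mul_log (neg_nonneg.mpr hz.le)
    rw [max_eq_right hz.le]
    nlinarith [mul_le_mul_of_nonpos_left hlog hz.le]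
  · simp
  · -- `s (s + 2z) = a²`, so `s z ≤ a²`
    have hsq : √(z ^ 2 + a ^ 2) ^ 2 = z ^ 2 + a ^ 2 := sq_sqrt (by positivity)
    have hsz : s * z ≤ a ^ 2 := by nlinarith [sqrt_nonneg (z ^ 2 + a ^ 2)]
    have hlog : log s + log z ≤ 2 * log a := by
      rw [← log_mul hs.ne' hz.ne', ← log_rpow ha]
      exact log_le_log (by positivity) (by exact_mod_cast hsz)
    have := self_sub_one_le_mul_log hz.le
    rw [max_eq_left hz.le]
    nlinarith [mul_le_mul_of_nonneg_left hlog hz.le]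

lemma integral_max_zero_pos {X : Type*} [MeasurableSpace X] {μ : Measure X} {w : X → ℝ}
    (hw : Integrable w μ) (hpos : 0 < μ {x | 0 < w x}) : 0 < ∫ x, max (w x) 0 ∂μ := by
  rw [integral_pos_iff_support_of_nonneg (f := fun x => max (w x) 0)
    (fun x => le_max_right _ _) hw.pos_part]
  convert hpos using 2
  ext x
  simp

section BoundedIntegrand

variable {X : Type*} [MeasurableSpace X] {μ : Measure X} [IsFiniteMeasure μ]
  {w : X → ℝ} {C : ℝ}

lemma Continuous.integrable_comp_of_abs_le {g : ℝ → ℝ} (hg : Continuous g) (hw : Measurable w)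
    (hbound : ∀ x, |w x| ≤ C) : Integrable (fun x => g (w x)) μ := by
  obtain ⟨M, hM⟩ := 
    (isCompact_Icc (a := -C) (b := C)).exists_bound_of_continuousOn hg.continuousOn
  exact .of_bound (hg.measurable.comp hw).aestronglyMeasurable M
    (ae_of_all _ fun x => hM _ (abs_le.mp (hbound x)))

lemma integral_mul_log_sqrt_sq_add_sq_sub_le (hw : Measurable w) (hbound : ∀ x, |w x| ≤ C)
    {a : ℝ} (ha : 0 < a) :
    ∫ x, w x * log (√(w x ^ 2 + a ^ 2) - w x) ∂μ ≤
      2 * (∫ x, max (w x) 0 ∂μ) * log a + μ.real Set.univ := by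
  have hint_pos : Integrable (fun x => max (w x) 0) μ :=
    (continuous_id.integrable_comp_of_abs_le hw hbound).pos_part
  have hint_bound : Integrable (fun x => 2 * max (w x) 0 * log a + 1) μ :=
    ((hint_pos.const_mul 2).mul_const _).add (integrable_const 1)
  calc ∫ x, w x * log (√(w x ^ 2 + a ^ 2) - w x) ∂μ
      ≤ ∫ x, (2 * max (w x) 0 * log a + 1) ∂μ :=
        integral_mono ((continuous_mul_log_sqrt_sq_add_sq_sub ha.ne').integrable_comp_of_abs_le
          hw hbound) hint_bound fun x => mul_log_sqrt_sq_add_sq_sub_le (w x) ha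
    _ = 2 * (∫ x, max (w x) 0 ∂μ) * log a + μ.real Set.univ := by
        rw [integral_add ((hint_pos.const_mul 2).mul_const _) (integrable_const 1),
          integral_mul_const, integral_const_mul, integral_const, smul_eq_mul, mul_one]

end BoundedIntegrand

lemma tendsto_mul_log_add_nhdsGT_zero_atBot {b : ℝ} (hb : 0 < b) (c : ℝ) :
    Tendsto (fun a => b * log a + c) (nhdsWithin 0 (Set.Ioi 0)) atBot :=
  tendsto_atBot_add_const_right _ c (tendsto_log_nhdsGT_zero.const_mul_atBot hb)

theorem integral_tendsto_atBot_general {X : Type*} [MeasurableSpace X] (μ : Measure X)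
    [IsFiniteMeasure μ] (w : X → ℝ) (hw : Measurable w) (C : ℝ)
    (hbound : ∀ x, |w x| ≤ C) (hpos : 0 < μ {x | 0 < w x}) :
    Tendsto (fun a : ℝ =>
        ∫ x, w x * Real.log (Real.sqrt ((w x) ^ 2 + a ^ 2) - w x) ∂μ)
      (nhdsWithin 0 (Set.Ioi 0)) atBot := by
  have hI : 0 < 2 * ∫ x, max (w x) 0 ∂μ :=
    mul_pos two_pos (integral_max_zero_pos (continuous_id.integrable_comp_of_abs_le hw hbound) hpos)
  refine tendsto_atBot_mono' _ ?_ (tendsto_mul_log_add_nhdsGT_zero_atBot hI (μ.real Set.univ))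
  filter_upwards [self_mem_nhdsWithin] with a ha
  exact integral_mul_log_sqrt_sq_add_sq_sub_le hw hbound ha

/-- If `μ` is a finite measure, `w` is measurable and bounded by `C > 0`, and the set
where `w > 0` has positive measure, then `∫ w · log (√(w² + a²) − w) dμ → −∞`
as `a → 0⁺`. -/
theorem integral_tendsto_atBot {X : Type*} [MeasurableSpace X] (μ : Measure X)
    [IsFiniteMeasure μ] (w : X → ℝ) (hw : Measurable w) (C : ℝ) (hC : 0 < C)
    (hbound : ∀ x, |w x| ≤ C) (hpos : 0 < μ {x | 0 < w x}) :
    Tendsto (fun a : ℝ =>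
        ∫ x, w x * Real.log (Real.sqrt ((w x) ^ 2 + a ^ 2) - w x) ∂μ)
      (nhdsWithin 0 (Set.Ioi 0)) atBot :=
  integral_tendsto_atBot_general μ w hw C hbound hpos
end

section
/- Let (X, μ) be a measure space with μ a finite measure, and let w : X → ℝ be a measurable function with |w(x)| ≤ C for all x, for some constant C > 0. Then exactly one of the following two exclusive cases holds: (1) μ({x | w(x) > 0}) > 0, and ∫_X w(x)·log(√(w(x)² + a²) − w(x)) dμ(x) tends to −∞ as a → 0⁺; or (2) w(x) ≤ 0 for μ-almost every x, and as a → 0⁺ the integrals ∫_X w(x)·log(√(w(x)² + a²) − w(x)) dμ(x) converge to the finite limit ∫_X w(x)·log(−2·w(x)) dμ(x), the integrand of the limit being understood as 0 where w(x) = 0. -/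
open Filter Real MeasureTheory

section AuxLemmas

lemma aux_abs_lt_sqrt {a : ℝ} (ha : 0 < a) (t : ℝ) : |t| < Real.sqrt (t^2 + a^2) := by
  have h : t^2 < t^2 + a^2 := by nlinarith
  calc |t| = Real.sqrt (t^2) := (Real.sqrt_sq_eq_abs t).symm
    _ < _ := Real.sqrt_lt_sqrt (sq_nonneg t) h

lemma aux_pos {a : ℝ} (ha : 0 < a) (t : ℝ) : 0 < Real.sqrt (t^2 + a^2) - t := by
  have h1 := aux_abs_lt_sqrt ha t
  have h2 := le_abs_self t
  linarith

lemma aux_upper {a : ℝ} (ha : 0 < a) (t : ℝ) : Real.sqrt (t^2 + a^2) ≤ |t| + a := by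
  have h1 : t^2 + a^2 ≤ (|t| + a)^2 := by nlinarith [abs_nonneg t, sq_abs t]
  calc Real.sqrt (t^2 + a^2) ≤ Real.sqrt ((|t| + a)^2) := Real.sqrt_le_sqrt h1
    _ = |t| + a := Real.sqrt_sq (by positivity)

lemma aux_abs_log_le {u lo hi : ℝ} (hlo : 0 < lo) (h1 : lo ≤ u) (h2 : u ≤ hi) :
    |Real.log u| ≤ |Real.log lo| + |Real.log hi| := by
  have hu : 0 < u := lt_of_lt_of_le hlo h1
  have l1 : Real.log lo ≤ Real.log u := Real.log_le_log hlo h1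
  have l2 : Real.log u ≤ Real.log hi := Real.log_le_log hu h2
  rw [abs_le]
  refine ⟨?_, ?_⟩
  · have := neg_abs_le (Real.log lo); have := abs_nonneg (Real.log hi); linarith
  · have := le_abs_self (Real.log hi); have := abs_nonneg (Real.log lo); linarith

lemma aux_ulogu {B s : ℝ} (hB : 1 ≤ B) (h0 : 0 < s) (hs : s ≤ B) :
    |s * Real.log s| ≤ 1 + B * Real.log B := by
  have hBlog : 0 ≤ B * Real.log B := mul_nonneg (by linarith) (Real.log_nonneg hB)
  rcases le_or_gt s 1 with h | h
  · have h1 := Real.abs_log_mul_self_lt s h0 h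
    calc |s * Real.log s| = |Real.log s * s| := by rw [mul_comm]
      _ ≤ 1 := h1.le
      _ ≤ _ := by linarith
  · have hlog : 0 ≤ Real.log s := Real.log_nonneg h.le
    have hle : Real.log s ≤ Real.log B := Real.log_le_log h0 hs
    rw [abs_of_nonneg (mul_nonneg (by linarith) hlog)]
    nlinarith

/-- The uniform bound for `t ≤ 0`. -/
lemma aux_pw_bound {C a t : ℝ} (hC : 0 < C) (ha : 0 < a) (ha1 : a ≤ 1)
    (ht : t ≤ 0) (htC : |t| ≤ C) :
    |t * Real.log (Real.sqrt (t^2 + a^2) - t)| ≤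
      2 + (1 + 2*C) * Real.log (1 + 2*C) + C * |Real.log (1 + 2*C)| := by
  have hlogC : 0 ≤ Real.log (1 + 2*C) := Real.log_nonneg (by linarith)
  rcases ht.lt_or_eq with h | h
  · set u := Real.sqrt (t^2 + a^2) - t with hu
    have hsq : |t| ≤ Real.sqrt (t^2 + a^2) := (aux_abs_lt_sqrt ha t).le
    have habs : |t| = -t := abs_of_neg h
    have hu1 : -2*t ≤ u := by rw [hu]; rw [habs] at hsq; linarith
    have hu2 : u ≤ 1 + 2*C := by
      have h2 := aux_upper ha t
      rw [hu]; rw [habs] at htC; linarith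
    have h2t : 0 < -2*t := by linarith
    have hlog : |Real.log u| ≤ |Real.log (-2*t)| + |Real.log (1 + 2*C)| :=
      aux_abs_log_le h2t hu1 hu2
    have hb1 : |(-2*t) * Real.log (-2*t)| ≤ 1 + (1 + 2*C) * Real.log (1 + 2*C) :=
      aux_ulogu (by linarith) h2t (by rw [habs] at htC; linarith)
    have hsplit : |t * Real.log u| ≤ |t| * |Real.log (-2*t)| + |t| * |Real.log (1 + 2*C)| := by
      rw [abs_mul]
      calc |t| * |Real.log u| ≤ |t| * (|Real.log (-2*t)| + |Real.log (1 + 2*C)|) :=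
            mul_le_mul_of_nonneg_left hlog (abs_nonneg t)
        _ = _ := by ring
    have h1 : |t| * |Real.log (-2*t)| ≤ |(-2*t) * Real.log (-2*t)| := by
      rw [abs_mul, abs_of_pos h2t, habs]
      have := abs_nonneg (Real.log (-2*t))
      nlinarith
    have h2 : |t| * |Real.log (1 + 2*C)| ≤ C * |Real.log (1 + 2*C)| :=
      mul_le_mul_of_nonneg_right htC (abs_nonneg _)
    linarith
  · rw [h]
    simp
    positivity

/-- pointwise limit for `t ≤ 0` -/
lemma aux_pw_tendsto {t : ℝ} (ht : t ≤ 0) :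
    Tendsto (fun a : ℝ => t * Real.log (Real.sqrt (t^2 + a^2) - t))
      (nhdsWithin 0 (Set.Ioi 0)) (nhds (t * Real.log (-2*t))) := by
  rcases ht.lt_or_eq with h | h
  · have hc1 : ContinuousAt (fun a : ℝ => Real.sqrt (t^2 + a^2) - t) 0 := by fun_prop
    have hval : Real.sqrt (t^2 + 0^2) - t = -2*t := by
      rw [show t^2 + 0^2 = t^2 by ring, Real.sqrt_sq_eq_abs, abs_of_neg h]; ring
    have hne : -2*t ≠ 0 := ne_of_gt (by linarith)
    have hc2 : ContinuousAt (fun a : ℝ => t * Real.log (Real.sqrt (t^2 + a^2) - t)) 0 := by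
      apply ContinuousAt.mul continuousAt_const
      exact ContinuousAt.log hc1 (by rw [hval]; exact hne)
    have h3 := hc2.tendsto
    rw [hval] at h3
    exact h3.mono_left nhdsWithin_le_nhds
  · subst h
    simp only [zero_mul]
    exact tendsto_const_nhds

/-- product identity: `(√(t²+a²)-t)(√(t²+a²)+t) = a²`, hence the log identity. -/
lemma aux_log_id {a : ℝ} (t : ℝ) (ha : 0 < a) :
    Real.log (Real.sqrt (t^2 + a^2) - t) =
      2 * Real.log a - Real.log (Real.sqrt (t^2 + a^2) + t) := by
  have hu : 0 < Real.sqrt (t^2 + a^2) - t := aux_pos ha t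
  have hv : 0 < Real.sqrt (t^2 + a^2) + t := by
    have h1 := aux_abs_lt_sqrt ha t
    have h2 := neg_abs_le t
    linarith
  have hsq : Real.sqrt (t^2 + a^2) ^ 2 = t^2 + a^2 := Real.sq_sqrt (by positivity)
  have hprod : (Real.sqrt (t^2 + a^2) - t) * (Real.sqrt (t^2 + a^2) + t) = a^2 := by
    nlinarith [hsq]
  have hlm := Real.log_mul (ne_of_gt hu) (ne_of_gt hv)
  rw [hprod, Real.log_pow] at hlm
  push_cast at hlm
  linarith

/-- lower bound for the argument, for any `t` with `|t| ≤ C` -/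
lemma aux_lo {C a t : ℝ} (hC : 0 < C) (ha : 0 < a) (ha1 : a ≤ 1) (htC : |t| ≤ C) :
    a^2 / (1 + 2*C) ≤ Real.sqrt (t^2 + a^2) - t := by
  have hu : 0 < Real.sqrt (t^2 + a^2) - t := aux_pos ha t
  have hv : 0 < Real.sqrt (t^2 + a^2) + t := by
    have h1 := aux_abs_lt_sqrt ha t
    have h2 := neg_abs_le t
    linarith
  have hupper : Real.sqrt (t^2 + a^2) + t ≤ 1 + 2*C := by
    have h2 := aux_upper ha t
    have h3 := le_abs_self t
    linarith
  have hsq : Real.sqrt (t^2 + a^2) ^ 2 = t^2 + a^2 := Real.sq_sqrt (by positivity)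
  have hprod : (Real.sqrt (t^2 + a^2) - t) * (Real.sqrt (t^2 + a^2) + t) = a^2 := by
    nlinarith [hsq]
  rw [div_le_iff₀ (by linarith)]
  nlinarith

end AuxLemmas

/-- Dichotomy: for a finite measure `μ` and measurable `w` bounded by `C > 0`, exactly one
of the following holds: (1) `μ {w > 0} > 0` and the integrals
`∫ w · log (√(w² + a²) − w) dμ` tend to `−∞` as `a → 0⁺`; or (2) `w ≤ 0` a.e. and the
integrals converge to the finite limit `∫ w · log (−2 w) dμ` (the integrand of the limit
being `0` where `w = 0`, as `Real.log 0 = 0`). -/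
theorem integral_dichotomy {X : Type*} [MeasurableSpace X] (μ : Measure X)
    [IsFiniteMeasure μ] (w : X → ℝ) (hw : Measurable w) (C : ℝ) (hC : 0 < C)
    (hbound : ∀ x, |w x| ≤ C) :
    Xor'
      (0 < μ {x | 0 < w x} ∧
        Tendsto (fun a : ℝ =>
            ∫ x, w x * Real.log (Real.sqrt ((w x) ^ 2 + a ^ 2) - w x) ∂μ)
          (nhdsWithin 0 (Set.Ioi 0)) atBot)
      ((∀ᵐ x ∂μ, w x ≤ 0) ∧
        Tendsto (fun a : ℝ =>
            ∫ x, w x * Real.log (Real.sqrt ((w x) ^ 2 + a ^ 2) - w x) ∂μ)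
          (nhdsWithin 0 (Set.Ioi 0))
          (nhds (∫ x, w x * Real.log (-2 * w x) ∂μ))) := by
  have hs : MeasurableSet {x | 0 < w x} := measurableSet_lt measurable_const hw
  set M : ℝ := 2 + (1 + 2*C) * Real.log (1 + 2*C) + C * |Real.log (1 + 2*C)| with hM_def
  have hM0 : 0 ≤ M := by
    have h1 : 0 ≤ (1 + 2*C) * Real.log (1 + 2*C) :=
      mul_nonneg (by linarith) (Real.log_nonneg (by linarith))
    have h2 : 0 ≤ C * |Real.log (1 + 2*C)| := mul_nonneg hC.le (abs_nonneg _)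
    rw [hM_def]; linarith
  have hmeas : ∀ a : ℝ, Measurable fun x =>
      w x * Real.log (Real.sqrt ((w x) ^ 2 + a ^ 2) - w x) := fun a =>
    hw.mul (Real.measurable_log.comp
      ((Real.continuous_sqrt.measurable.comp ((hw.pow_const 2).add_const (a^2))).sub hw))
  have hwint : Integrable w μ :=
    (integrable_const C).mono' hw.aestronglyMeasurable
      (Eventually.of_forall fun x => by rw [Real.norm_eq_abs]; exact hbound x)
  have hint : ∀ a : ℝ, 0 < a → a ≤ 1 →
      Integrable (fun x => w x * Real.log (Real.sqrt ((w x) ^ 2 + a ^ 2) - w x)) μ := by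
    intro a ha ha1
    refine (integrable_const (C * (|Real.log (a^2/(1+2*C))| + |Real.log (1+2*C)|))).mono'
      (hmeas a).aestronglyMeasurable (Eventually.of_forall fun x => ?_)
    rw [Real.norm_eq_abs, abs_mul]
    have hlo : a^2/(1+2*C) ≤ Real.sqrt ((w x)^2 + a^2) - w x := aux_lo hC ha ha1 (hbound x)
    have hhi : Real.sqrt ((w x)^2 + a^2) - w x ≤ 1 + 2*C := by
      have h2 := aux_upper ha (w x)
      have h3 := neg_abs_le (w x)
      have h4 := hbound x
      linarith
    have h5 := aux_abs_log_le (by positivity) hlo hhi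
    exact mul_le_mul (hbound x) h5 (abs_nonneg _) hC.le
  by_cases h : μ {x | 0 < w x} = 0
  · -- Case 2: w ≤ 0 a.e.
    have hae : ∀ᵐ x ∂μ, w x ≤ 0 := by
      rw [ae_iff]
      simpa only [not_le] using h
    refine Or.inr ⟨⟨hae, ?_⟩, fun hp => by simp [h] at hp⟩
    apply tendsto_integral_filter_of_dominated_convergence (bound := fun _ => M)
    · exact Eventually.of_forall fun a => (hmeas a).aestronglyMeasurable
    · filter_upwards [Ioc_mem_nhdsGT_of_mem (Set.left_mem_Ico.mpr one_pos)] with a ha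
      filter_upwards [hae] with x hx
      rw [Real.norm_eq_abs]
      exact aux_pw_bound hC ha.1 ha.2 hx (hbound x)
    · exact integrable_const M
    · filter_upwards [hae] with x hx
      exact aux_pw_tendsto hx
  · -- Case 1: μ {w > 0} > 0
    have hpos : 0 < μ {x | 0 < w x} := pos_iff_ne_zero.mpr h
    set m : ℝ := ∫ x in {x | 0 < w x}, w x ∂μ with hm_def
    have hm : 0 < m := by
      rw [hm_def]
      rw [integral_pos_iff_support_of_nonneg_ae ?_ hwint.restrict]
      · have hsub : {x | 0 < w x} ⊆ Function.support w := fun x hx => ne_of_gt hx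
        have hsupp : MeasurableSet (Function.support w) := hw (measurableSet_singleton 0).compl
        rw [Measure.restrict_apply hsupp, Set.inter_eq_self_of_subset_right hsub]
        exact hpos
      · filter_upwards [ae_restrict_mem hs] with x hx
        exact le_of_lt hx
    have key : ∀ a : ℝ, 0 < a → a ≤ 1 →
        (∫ x, w x * Real.log (Real.sqrt ((w x) ^ 2 + a ^ 2) - w x) ∂μ) ≤
          2 * m * Real.log a + 2 * M * (μ Set.univ).toReal := by
      intro a ha ha1
      have hFi := hint a ha ha1
      have hsplit : (∫ x, w x * Real.log (Real.sqrt ((w x) ^ 2 + a ^ 2) - w x) ∂μ) =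
          (∫ x in {x | 0 < w x}, w x * Real.log (Real.sqrt ((w x) ^ 2 + a ^ 2) - w x) ∂μ) +
          ∫ x in {x | 0 < w x}ᶜ, w x * Real.log (Real.sqrt ((w x) ^ 2 + a ^ 2) - w x) ∂μ :=
        (integral_add_compl hs hFi).symm
      -- measurability of the `v`-integrand
      have hmeasv : Measurable fun x =>
          w x * Real.log (Real.sqrt ((w x) ^ 2 + a ^ 2) + w x) :=
        hw.mul (Real.measurable_log.comp
          ((Real.continuous_sqrt.measurable.comp ((hw.pow_const 2).add_const (a^2))).add hw))
      -- bound on s for the `v`-integrand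
      have hbv : ∀ᵐ x ∂(μ.restrict {x | 0 < w x}),
          ‖w x * Real.log (Real.sqrt ((w x) ^ 2 + a ^ 2) + w x)‖ ≤ M := by
        filter_upwards [ae_restrict_mem hs] with x hx
        have hb := aux_pw_bound (t := -(w x)) hC ha ha1 (by have hx0 : 0 < w x := hx; linarith)
          (by rw [abs_neg]; exact hbound x)
        rw [neg_sq, sub_neg_eq_add, neg_mul, abs_neg] at hb
        rw [Real.norm_eq_abs]
        exact hb
      have hintv : Integrable (fun x => w x * Real.log (Real.sqrt ((w x) ^ 2 + a ^ 2) + w x))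
          (μ.restrict {x | 0 < w x}) :=
        (integrable_const M).mono' hmeasv.aestronglyMeasurable hbv
      -- rewrite integral over s
      have hss : (∫ x in {x | 0 < w x}, w x * Real.log (Real.sqrt ((w x) ^ 2 + a ^ 2) - w x) ∂μ) =
          2 * Real.log a * m -
          ∫ x in {x | 0 < w x}, w x * Real.log (Real.sqrt ((w x) ^ 2 + a ^ 2) + w x) ∂μ := by
        have heq : ∀ x, w x * Real.log (Real.sqrt ((w x) ^ 2 + a ^ 2) - w x) =
            2 * Real.log a * w x - w x * Real.log (Real.sqrt ((w x) ^ 2 + a ^ 2) + w x) := by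
          intro x
          rw [aux_log_id (w x) ha]
          ring
        calc (∫ x in {x | 0 < w x}, w x * Real.log (Real.sqrt ((w x) ^ 2 + a ^ 2) - w x) ∂μ)
            = ∫ x in {x | 0 < w x}, (2 * Real.log a * w x -
                w x * Real.log (Real.sqrt ((w x) ^ 2 + a ^ 2) + w x)) ∂μ :=
              integral_congr_ae (Eventually.of_forall heq)
          _ = (∫ x in {x | 0 < w x}, 2 * Real.log a * w x ∂μ) -
              ∫ x in {x | 0 < w x}, w x * Real.log (Real.sqrt ((w x) ^ 2 + a ^ 2) + w x) ∂μ :=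
              integral_sub (hwint.restrict.const_mul _) hintv
          _ = _ := by rw [integral_const_mul, hm_def]
      -- bound for the `v` part
      have hsb : |∫ x in {x | 0 < w x}, w x * Real.log (Real.sqrt ((w x) ^ 2 + a ^ 2) + w x) ∂μ| ≤
          M * (μ Set.univ).toReal := by
        rw [← Real.norm_eq_abs]
        calc ‖∫ x in {x | 0 < w x}, w x * Real.log (Real.sqrt ((w x) ^ 2 + a ^ 2) + w x) ∂μ‖
            ≤ M * ((μ.restrict {x | 0 < w x}) Set.univ).toReal :=
              norm_integral_le_of_norm_le_const hbv
          _ ≤ M * (μ Set.univ).toReal := by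
              refine mul_le_mul_of_nonneg_left ?_ hM0
              refine ENNReal.toReal_mono (measure_ne_top μ _) ?_
              rw [Measure.restrict_apply MeasurableSet.univ, Set.univ_inter]
              exact measure_mono (Set.subset_univ _)
      -- bound for the complement part
      have hcb : |∫ x in {x | 0 < w x}ᶜ, w x * Real.log (Real.sqrt ((w x) ^ 2 + a ^ 2) - w x) ∂μ| ≤
          M * (μ Set.univ).toReal := by
        have hbc : ∀ᵐ x ∂(μ.restrict {x | 0 < w x}ᶜ),
            ‖w x * Real.log (Real.sqrt ((w x) ^ 2 + a ^ 2) - w x)‖ ≤ M := by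
          filter_upwards [ae_restrict_mem hs.compl] with x hx
          have hx' : w x ≤ 0 := by
            simp only [Set.mem_compl_iff, Set.mem_setOf_eq, not_lt] at hx
            exact hx
          rw [Real.norm_eq_abs]
          exact aux_pw_bound hC ha ha1 hx' (hbound x)
        rw [← Real.norm_eq_abs]
        calc ‖∫ x in {x | 0 < w x}ᶜ, w x * Real.log (Real.sqrt ((w x) ^ 2 + a ^ 2) - w x) ∂μ‖
            ≤ M * ((μ.restrict {x | 0 < w x}ᶜ) Set.univ).toReal :=
              norm_integral_le_of_norm_le_const hbc
          _ ≤ M * (μ Set.univ).toReal := by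
              refine mul_le_mul_of_nonneg_left ?_ hM0
              refine ENNReal.toReal_mono (measure_ne_top μ _) ?_
              rw [Measure.restrict_apply MeasurableSet.univ, Set.univ_inter]
              exact measure_mono (Set.subset_univ _)
      rw [hsplit, hss]
      have e1 := abs_le.1 hsb
      have e2 := abs_le.1 hcb
      have e3 : 2 * Real.log a * m = 2 * m * Real.log a := by ring
      linarith
    -- conclude
    have hlog := Real.tendsto_log_nhdsGT_zero
    have h1 : Tendsto (fun a : ℝ => 2 * m * Real.log a) (nhdsWithin 0 (Set.Ioi 0)) atBot :=
      Tendsto.const_mul_atBot (by linarith : (0:ℝ) < 2 * m) hlog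
    have h2 : Tendsto (fun a : ℝ => 2 * m * Real.log a + 2 * M * (μ Set.univ).toReal)
        (nhdsWithin 0 (Set.Ioi 0)) atBot := tendsto_atBot_add_const_right _ _ h1
    refine Or.inl ⟨⟨hpos, ?_⟩, ?_⟩
    · refine tendsto_atBot_mono' _ ?_ h2
      filter_upwards [Ioc_mem_nhdsGT_of_mem (Set.left_mem_Ico.mpr one_pos)] with a ha
      exact key a ha.1 ha.2
    · rintro ⟨hq, -⟩
      rw [ae_iff] at hq
      simp only [not_le] at hq
      exact h hq
end
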